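/- Let G be a group, φ : G → ℤ a surjective group homomorphism, g ∈ G with φ(g) = 1, L₀ a subgroup of ker φ, and n ≥ 1 an integer. Set Lᵢ = g^{-i} L₀ g^{i} for 0 ≤ i ≤ n−1. Assume: (1) gⁿ commutes with every element of ker φ; (2) for all i ≠ j every element of Lᵢ commutes with every element of Lⱼ, and the multiplication map L₀ × L₁ × ⋯ × L_{n−1} → ker φ, (x₀, …, x_{n−1}) ↦ x₀ x₁ ⋯ x_{n−1}, is a bijection (i.e. ker φ is the internal direct product of L₀, …, L_{n−1}). Then the map ξ : L₀ ≀ₙ ℤ → G defined by ξ(b₀, b₁, …, b_{n−1}; k) = b₀ (g^{-1} b₁ g) (g^{-2} b₂ g^{2}) ⋯ (g^{-(n−1)} b_{n−1} g^{n−1}) · g^{k} is a group isomorphism. -/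

import Mathlib

open Pointwise

open Fin.CommRing in
/-- The multiplication of the wreath product `H ≀ₙ ℤ`: the underlying set is
`(Fin n → H) × ℤ` and `(b, k) * (b', k') = (b · α(b'; k), k + k')`, where
`α(b'; k) i = b' (i + k)`, indices taken modulo `n` (this is the semidirect product
`Hⁿ ⋊ ℤ` with respect to the cyclic-shift action of `ℤ` on `Hⁿ`). -/
def wreathMul {H : Type*} [Group H] {n : ℕ} [NeZero n]
    (p q : (Fin n → H) × ℤ) : (Fin n → H) × ℤ :=
  (p.1 * fun i : Fin n => q.1 (i + (p.2 : Fin n)), p.2 + q.2)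

/-- The map `ξ : L₀ ≀ₙ ℤ → G`,
`ξ(b₀, …, b_{n-1}; k) = b₀ (g⁻¹ b₁ g) (g⁻² b₂ g²) ⋯ (g^{-(n-1)} b_{n-1} g^{n-1}) · g ^ k`. -/
def wreathToGroup {G : Type*} [Group G] (g : G) (n : ℕ) (L₀ : Subgroup G)
    (p : (Fin n → L₀) × ℤ) : G :=
  ((List.finRange n).map fun i : Fin n =>
    (g ^ (i : ℕ))⁻¹ * ((p.1 i : G)) * g ^ (i : ℕ)).prod * g ^ p.2

/-! The base map `b ↦ ∏ᵢ g⁻ⁱ bᵢ gⁱ` is a homomorphism `L₀ⁿ → G` because the conjugates `Lᵢ`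
commute pairwise, and the direct-product hypothesis makes it a bijection onto `ker φ`; as
`φ g = 1`, every element of `G` is uniquely `y gᵏ` with `y ∈ ker φ`, so `ξ` is bijective.
Multiplicativity comes down to `gᵏ (g⁻ʲ x gʲ) g⁻ᵏ = g⁻ᵐ x gᵐ` with `m = (j - k) mod n`, valid
because `gⁿ` centralizes `ker φ`: conjugation by `gᵏ` acts on the base as the cyclic shift
by `k`. -/

open Fin.CommRing

theorem Fin.val_sub_intCast_modEq {n : ℕ} [NeZero n] (j : Fin n) (k : ℤ) :
    (((j - k : Fin n) : ℕ) : ℤ) ≡ (j : ℕ) - k [ZMOD n] :=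
  (CharP.intCast_eq_intCast (Fin n) n).1 (by simp)

section Conj

variable {G : Type*} [Group G] {g x : G} {n : ℕ}

theorem MulAut.conj_zpow_eq_of_modEq (hx : Commute (g ^ n) x) {m m' : ℤ}
    (h : m ≡ m' [ZMOD n]) : MulAut.conj (g ^ m) x = MulAut.conj (g ^ m') x := by
  obtain ⟨t, ht⟩ := h.dvd
  have hm' : g ^ m' = g ^ m * (g ^ n) ^ t := by
    rw [← zpow_natCast, ← zpow_mul, ← zpow_add]
    congr 1
    linarith
  rw [hm', map_mul, MulAut.mul_apply, MulAut.conj_apply ((g ^ n) ^ t), (hx.zpow_left t).eq,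
    mul_inv_cancel_right]

theorem MulAut.conj_zpow_conj_pow_inv [NeZero n] (hx : Commute (g ^ n) x) (j : Fin n) (k : ℤ) :
    MulAut.conj (g ^ k) (MulAut.conj (g ^ (j : ℕ))⁻¹ x)
      = MulAut.conj (g ^ ((j - k : Fin n) : ℕ))⁻¹ x := by
  rw [← MulAut.mul_apply, ← map_mul, ← zpow_natCast, ← zpow_neg, ← zpow_add, ← zpow_natCast,
    ← zpow_neg]
  refine MulAut.conj_zpow_eq_of_modEq hx ?_
  have h := (Fin.val_sub_intCast_modEq j k).neg
  rw [neg_sub] at h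
  convert h.symm using 1
  ring

end Conj

theorem MonoidHom.noncommPiCoprod_apply_eq_prod_finRange {M : Type*} [Monoid M] {n : ℕ}
    {N : Fin n → Type*} [∀ i, Monoid (N i)] (ϕ : ∀ i, N i →* M)
    (hcomm : Pairwise fun i j => ∀ x y, Commute (ϕ i x) (ϕ j y)) (b : ∀ i, N i) :
    MonoidHom.noncommPiCoprod ϕ hcomm b = ((List.finRange n).map fun i => ϕ i (b i)).prod := by
  rw [MonoidHom.noncommPiCoprod_apply, ← Finset.noncommProd_toFinset _ _
    (fun i _ j _ h => hcomm h _ _) (List.nodup_finRange n)]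
  simp only [List.toFinset_finRange]

theorem MonoidHom.bijOn_noncommPiCoprod {G : Type*} [Group G] {n : ℕ} {N : Fin n → Type*}
    [∀ i, Group (N i)] {ϕ : ∀ i, N i →* G}
    (hcomm : Pairwise fun i j => ∀ x y, Commute (ϕ i x) (ϕ j y))
    (hϕ : ∀ i, Function.Injective (ϕ i)) {L : Fin n → Subgroup G} (hL : ∀ i, (ϕ i).range = L i)
    {K : Subgroup G} (hLK : ∀ i, L i ≤ K)
    (hdirect : ∀ y ∈ K,
      ∃! b : (i : Fin n) → L i, ((List.finRange n).map fun i => (b i : G)).prod = y) :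
    Set.BijOn (MonoidHom.noncommPiCoprod ϕ hcomm) Set.univ K := by
  have hmapsTo : Set.MapsTo (MonoidHom.noncommPiCoprod ϕ hcomm) Set.univ K := by
    have hrange : (MonoidHom.noncommPiCoprod ϕ hcomm).range ≤ K := by
      rw [MonoidHom.noncommPiCoprod_range]
      exact iSup_le fun i => (hL i).le.trans (hLK i)
    exact fun b _ => hrange ⟨b, rfl⟩
  let lift (b : ∀ i, N i) : (i : Fin n) → L i := fun i => ⟨ϕ i (b i), hL i ▸ ⟨b i, rfl⟩⟩
  have hlift (b : ∀ i, N i) : ((List.finRange n).map fun i => (lift b i : G)).prod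
      = MonoidHom.noncommPiCoprod ϕ hcomm b :=
    (MonoidHom.noncommPiCoprod_apply_eq_prod_finRange ϕ hcomm b).symm
  refine ⟨hmapsTo, fun b _ b' _ h => ?_, fun y hy => ?_⟩
  · have hbb' : lift b = lift b' :=
      (hdirect _ (hmapsTo trivial)).unique (hlift b) ((hlift b').trans h.symm)
    exact funext fun i => hϕ i (congrArg Subtype.val (congrFun hbb' i))
  · obtain ⟨B, hB, -⟩ := hdirect y hy
    choose a ha using fun i => (hL i).ge (B i).2
    refine ⟨a, trivial, ?_⟩
    simp only [MonoidHom.noncommPiCoprod_apply_eq_prod_finRange, ha, hB]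

theorem bijective_mul_zpow_of_bijOn {G B : Type*} [Group G] (φ : G →* Multiplicative ℤ) {g : G}
    (hg : φ g = Multiplicative.ofAdd 1) {f : B → G} (hf : Set.BijOn f Set.univ φ.ker) :
    Function.Bijective fun p : B × ℤ => f p.1 * g ^ p.2 := by
  have hφg (k : ℤ) : φ (g ^ k) = Multiplicative.ofAdd k := by
    rw [map_zpow, hg, ← ofAdd_zsmul, smul_eq_mul, mul_one]
  have hφ (p : B × ℤ) : φ (f p.1 * g ^ p.2) = Multiplicative.ofAdd p.2 := by
    rw [map_mul, hf.mapsTo trivial, hφg, one_mul]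
  refine ⟨fun p q h => ?_, fun x => ?_⟩
  · dsimp only at h
    have h2 : p.2 = q.2 := Multiplicative.ofAdd.injective (by rw [← hφ p, ← hφ q, h])
    rw [h2, mul_left_inj] at h
    exact Prod.ext (hf.injOn trivial trivial h) h2
  · have hx : x * (g ^ (φ x).toAdd)⁻¹ ∈ φ.ker := by
      rw [MonoidHom.mem_ker, map_mul, map_inv, hφg, ofAdd_toAdd, mul_inv_cancel]
    obtain ⟨b, -, hb⟩ := hf.surjOn hx
    exact ⟨(b, (φ x).toAdd), by simp only [hb, inv_mul_cancel_right]⟩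

def cyclicShift (H : Type*) [Monoid H] {n : ℕ} (κ : Fin n) : (Fin n → H) →* (Fin n → H) where
  toFun b i := b (i + κ)
  map_one' := rfl
  map_mul' _ _ := rfl

theorem cyclicShift_mulSingle {H : Type*} [Monoid H] {n : ℕ} [NeZero n] (κ j : Fin n) (x : H) :
    cyclicShift H κ (Pi.mulSingle j x) = Pi.mulSingle (j - κ) x := by
  ext i
  simp [cyclicShift, Pi.mulSingle_apply, eq_sub_iff_add_eq]

theorem wreathMul_eq_mul_cyclicShift {H : Type*} [Group H] {n : ℕ} [NeZero n]
    (p q : (Fin n → H) × ℤ) : wreathMul p q = (p.1 * cyclicShift H p.2 q.1, p.2 + q.2) :=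
  rfl

section ConjPow

variable {G : Type*} [Group G] (g : G) (L₀ : Subgroup G)

def conjPowHom (i : ℕ) : L₀ →* G := (MulAut.conj (g ^ i)⁻¹).toMonoidHom.comp L₀.subtype

theorem conjPowHom_apply (i : ℕ) (x : L₀) : conjPowHom g L₀ i x = MulAut.conj (g ^ i)⁻¹ x :=
  rfl

theorem conjPowHom_injective (i : ℕ) : Function.Injective (conjPowHom g L₀ i) :=
  (MulAut.conj (g ^ i)⁻¹).injective.comp Subtype.val_injective

theorem range_conjPowHom (i : ℕ) : (conjPowHom g L₀ i).range = MulAut.conj (g ^ i)⁻¹ • L₀ := by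
  ext y
  simp [Subgroup.mem_smul_pointwise_iff_exists, conjPowHom_apply]

end ConjPow

section Wreath

variable {G : Type*} [Group G] {g : G} {L₀ : Subgroup G} {n : ℕ}
  (hcomm : Pairwise fun i j : Fin n => ∀ x y, Commute (conjPowHom g L₀ i x) (conjPowHom g L₀ j y))

theorem wreathToGroup_eq_noncommPiCoprod_mul (p : (Fin n → L₀) × ℤ) :
    wreathToGroup g n L₀ p
      = MonoidHom.noncommPiCoprod (fun i : Fin n => conjPowHom g L₀ i) hcomm p.1 * g ^ p.2 := by
  simp only [wreathToGroup, MonoidHom.noncommPiCoprod_apply_eq_prod_finRange, conjPowHom_apply,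
    MulAut.conj_apply, inv_inv]

theorem conj_zpow_comp_noncommPiCoprod [NeZero n] (hgn : ∀ x : L₀, Commute (g ^ n) x) (k : ℤ) :
    (MulAut.conj (g ^ k)).toMonoidHom.comp
        (MonoidHom.noncommPiCoprod (fun i : Fin n => conjPowHom g L₀ i) hcomm)
      = (MonoidHom.noncommPiCoprod _ hcomm).comp (cyclicShift L₀ k) := by
  refine MonoidHom.pi_ext fun j x => ?_
  simp only [MonoidHom.comp_apply, MulEquiv.coe_toMonoidHom, cyclicShift_mulSingle,
    MonoidHom.noncommPiCoprod_mulSingle, conjPowHom_apply]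
  exact MulAut.conj_zpow_conj_pow_inv (hgn x) j k

end Wreath

theorem wreathToGroup_wreathMul {G : Type*} [Group G] {g : G} {L₀ : Subgroup G} {n : ℕ} [NeZero n]
    (hcomm : Pairwise fun i j : Fin n =>
      ∀ x y, Commute (conjPowHom g L₀ i x) (conjPowHom g L₀ j y))
    (hgn : ∀ x : L₀, Commute (g ^ n) x) (p q : (Fin n → L₀) × ℤ) :
    wreathToGroup g n L₀ (wreathMul p q) = wreathToGroup g n L₀ p * wreathToGroup g n L₀ q := by
  have hshift := DFunLike.congr_fun (conj_zpow_comp_noncommPiCoprod hcomm hgn p.2) q.1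
  simp only [MonoidHom.comp_apply, MulEquiv.coe_toMonoidHom, MulAut.conj_apply] at hshift
  simp only [wreathToGroup_eq_noncommPiCoprod_mul hcomm, wreathMul_eq_mul_cyclicShift, map_mul,
    zpow_add, ← hshift]
  group

theorem wreathToGroup_isIso_general {G : Type*} [Group G]
    (φ : G →* Multiplicative ℤ)
    (g : G) (hg : φ g = Multiplicative.ofAdd 1)
    (n : ℕ) [NeZero n]
    (L₀ : Subgroup G) (hL₀ : L₀ ≤ φ.ker)
    (hgn : ∀ x ∈ φ.ker, g ^ n * x = x * g ^ n)
    (L : ℕ → Subgroup G) (hL : ∀ i, L i = MulAut.conj (g ^ i)⁻¹ • L₀)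
    (hcomm : ∀ i j, i < n → j < n → i ≠ j →
      ∀ x ∈ L i, ∀ y ∈ L j, x * y = y * x)
    (hdirect : ∀ y ∈ φ.ker, ∃! b : (i : Fin n) → L (i : ℕ),
      ((List.finRange n).map fun i : Fin n => ((b i : G))).prod = y) :
    (∀ p q : (Fin n → L₀) × ℤ,
      wreathToGroup g n L₀ (wreathMul p q)
        = wreathToGroup g n L₀ p * wreathToGroup g n L₀ q)
    ∧ Function.Bijective (wreathToGroup g n L₀) := by
  have hrange (i : ℕ) : (conjPowHom g L₀ i).range = L i :=
    (range_conjPowHom g L₀ i).trans (hL i).symm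
  have hcomm' : Pairwise fun i j : Fin n =>
      ∀ x y, Commute (conjPowHom g L₀ i x) (conjPowHom g L₀ j y) := fun i j hij x y =>
    hcomm i j i.2 j.2 (Fin.val_ne_of_ne hij) _ (hrange i ▸ ⟨x, rfl⟩) _ (hrange j ▸ ⟨y, rfl⟩)
  have hLker (i : ℕ) : L i ≤ φ.ker := by
    rw [← hrange i]
    rintro _ ⟨x, rfl⟩
    exact φ.normal_ker.conj_mem _ (hL₀ x.2) _
  refine ⟨wreathToGroup_wreathMul hcomm' fun x => hgn x (hL₀ x.2), ?_⟩
  rw [show wreathToGroup g n L₀ = _ from funext (wreathToGroup_eq_noncommPiCoprod_mul hcomm')]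
  exact bijective_mul_zpow_of_bijOn φ hg <| MonoidHom.bijOn_noncommPiCoprod hcomm'
    (conjPowHom_injective g L₀ ·) (hrange ·) (hLker ·) hdirect

/-- Let `G` be a group, `φ : G → ℤ` a surjective homomorphism, `g ∈ G`
with `φ g = 1`, `L₀ ≤ ker φ` a subgroup and `n ≥ 1`.  Let `L i = g⁻ⁱ L₀ gⁱ` for
`0 ≤ i ≤ n - 1`.  Assume (1) `g ^ n` commutes with every element of `ker φ`;
(2) the subgroups `L i`, `L j` commute elementwise for `i ≠ j` and the multiplication
map `L₀ × L₁ × ⋯ × L_{n-1} → ker φ` is a bijection (i.e. every element of `ker φ` is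
uniquely a product `x₀ x₁ ⋯ x_{n-1}` with `xᵢ ∈ L i`).  Then
`ξ(b₀, …, b_{n-1}; k) = b₀ (g⁻¹ b₁ g) ⋯ (g^{-(n-1)} b_{n-1} g^{n-1}) g ^ k` is a group
isomorphism `L₀ ≀ₙ ℤ → G`: it is multiplicative and bijective. -/
theorem wreathToGroup_isIso {G : Type*} [Group G]
    (φ : G →* Multiplicative ℤ) (hφ : Function.Surjective φ)
    (g : G) (hg : φ g = Multiplicative.ofAdd 1)
    (n : ℕ) [NeZero n]
    (L₀ : Subgroup G) (hL₀ : L₀ ≤ φ.ker)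
    (hgn : ∀ x ∈ φ.ker, g ^ n * x = x * g ^ n)
    (L : ℕ → Subgroup G) (hL : ∀ i, L i = MulAut.conj (g ^ i)⁻¹ • L₀)
    (hcomm : ∀ i j, i < n → j < n → i ≠ j →
      ∀ x ∈ L i, ∀ y ∈ L j, x * y = y * x)
    (hdirect : ∀ y ∈ φ.ker, ∃! b : (i : Fin n) → L (i : ℕ),
      ((List.finRange n).map fun i : Fin n => ((b i : G))).prod = y) :
    (∀ p q : (Fin n → L₀) × ℤ,
      wreathToGroup g n L₀ (wreathMul p q)
        = wreathToGroup g n L₀ p * wreathToGroup g n L₀ q)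
    ∧ Function.Bijective (wreathToGroup g n L₀) :=
  wreathToGroup_isIso_general φ g hg n L₀ hL₀ hgn L hL hcomm hdirect
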